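/- arXiv:1806.06651 — 2 statements merged into one kernel-verified Lean document; each statement's English description precedes it below -/
import Mathlib

section
/- Let N be a positive integer, let A = (a_ij) be a nonnegative real N×N matrix, let σ ≥ 0 and let ω ∈ ℝ^N be a vector with ω_i > 0 for all i and Σ_{i=1}^N ω_i a_ij = σ ω_j for all j. Let λ > 0 and α ∈ (0,1) satisfy λ(1+α)σ < 1. Suppose ρ : ℝ → ℝ^N and φ : ℝ → ℝ^N are such that for all t ≥ 0 and all i: 0 ≤ ρ_i(t) ≤ 1, 0 ≤ φ_i(t) ≤ 1, and ρ_i is differentiable at t with ρ_i′(t) = −ρ_i(t) + λ φ_i(t)(1−ρ_i(t)) Σ_{j=1}^N a_ij ρ_j(t). Then for each i, ρ_i(t) → 0 as t → ∞. -/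
/-!
The weighted prevalence `V = ∑ ωᵢ ρᵢ` is a Lyapunov function. Bounding the infection factor
`φᵢ (1 - ρᵢ)` by `1` and using that `ω` is a left eigenvector of `A`, one gets
`V' ≤ -(1 - λσ) V`, and `λσ < 1` follows from the threshold. By Grönwall `V` decays
exponentially, and every `ρᵢ ≤ V / ωᵢ` decays with it.
-/

open Finset Filter Topology

theorem le_mul_exp_of_hasDerivAt_le_mul {f f' : ℝ → ℝ} {K : ℝ}
    (hf : ∀ t, 0 ≤ t → HasDerivAt f (f' t) t) (hbound : ∀ t, 0 ≤ t → f' t ≤ K * f t)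
    {t : ℝ} (ht : 0 ≤ t) : f t ≤ f 0 * Real.exp (K * t) := by
  have := le_gronwallBound_of_liminf_deriv_right_le (b := t) (ε := 0)
    (fun x hx => (hf x hx.1).continuousAt.continuousWithinAt)
    (fun x hx _ hr => (hf x hx.1).hasDerivWithinAt.liminf_right_slope_le hr) le_rfl
    (fun x hx => by simpa using hbound x hx.1) t ⟨ht, le_rfl⟩
  simpa [gronwallBound_ε0] using this

theorem tendsto_zero_of_nonneg_of_le_mul_exp_neg {f : ℝ → ℝ} {C c : ℝ} (hc : 0 < c)
    (hf₀ : ∀ t, 0 ≤ t → 0 ≤ f t) (hf : ∀ t, 0 ≤ t → f t ≤ C * Real.exp (-c * t)) :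
    Tendsto f atTop (𝓝 0) := by
  have hexp : Tendsto (fun t => C * Real.exp (-c * t)) atTop (𝓝 0) := by
    simpa using (Real.tendsto_exp_atBot.comp
      (tendsto_id.const_mul_atTop_of_neg (neg_neg_of_pos hc))).const_mul C
  exact tendsto_of_tendsto_of_tendsto_of_le_of_le' tendsto_const_nhds hexp
    (eventually_atTop.2 ⟨0, hf₀⟩) (eventually_atTop.2 ⟨0, hf⟩)

section WeightedSum

variable {ι : Type*} [Fintype ι]

theorem sum_mul_sum_eq_of_left_eigenvector {A : ι → ι → ℝ} {ω : ι → ℝ} {σ : ℝ}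
    (heig : ∀ j, ∑ i, ω i * A i j = σ * ω j) (x : ι → ℝ) :
    ∑ i, ω i * ∑ j, A i j * x j = σ * ∑ j, ω j * x j := by
  calc ∑ i, ω i * ∑ j, A i j * x j = ∑ j, (∑ i, ω i * A i j) * x j := by
        simp only [mul_sum, sum_mul, mul_assoc]; exact sum_comm
    _ = σ * ∑ j, ω j * x j := by simp only [heig, mul_sum, mul_assoc]

theorem tendsto_apply_of_tendsto_weighted_sum {α : Type*} {l : Filter α} {x : α → ι → ℝ}
    {ω : ι → ℝ} (hω : ∀ i, 0 < ω i) (hx : ∀ᶠ a in l, ∀ i, 0 ≤ x a i)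
    (hsum : Tendsto (fun a => ∑ i, ω i * x a i) l (𝓝 0)) (i : ι) :
    Tendsto (fun a => x a i) l (𝓝 0) := by
  have hle : ∀ᶠ a in l, x a i ≤ (∑ j, ω j * x a j) / ω i := hx.mono fun a ha => by
    rw [le_div_iff₀' (hω i)]
    exact single_le_sum (f := fun j => ω j * x a j)
      (fun j _ => mul_nonneg (hω j).le (ha j)) (mem_univ i)
  exact tendsto_of_tendsto_of_tendsto_of_le_of_le' tendsto_const_nhds
    (by simpa using hsum.div_const (ω i)) (hx.mono fun a ha => ha i) hle

theorem sum_mul_sis_le {A : ι → ι → ℝ} {ω φ ρ : ι → ℝ} {σ lam : ℝ}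
    (hA : ∀ i j, 0 ≤ A i j) (hω : ∀ i, 0 ≤ ω i) (heig : ∀ j, ∑ i, ω i * A i j = σ * ω j)
    (hlam : 0 ≤ lam) (hρ : ∀ i, ρ i ∈ Set.Icc (0 : ℝ) 1) (hφ : ∀ i, φ i ∈ Set.Icc (0 : ℝ) 1) :
    ∑ i, ω i * (-(ρ i) + lam * φ i * (1 - ρ i) * ∑ j, A i j * ρ j) ≤
      -(1 - lam * σ) * ∑ i, ω i * ρ i := by
  have hinfection : ∀ i, lam * φ i * (1 - ρ i) * ∑ j, A i j * ρ j ≤ lam * ∑ j, A i j * ρ j := by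
    intro i
    have hS : 0 ≤ lam * ∑ j, A i j * ρ j :=
      mul_nonneg hlam (sum_nonneg fun j _ => mul_nonneg (hA i j) (hρ j).1)
    have hfactor : φ i * (1 - ρ i) ≤ 1 :=
      mul_le_one₀ (hφ i).2 (sub_nonneg.2 (hρ i).2) (by linarith [(hρ i).1])
    calc lam * φ i * (1 - ρ i) * ∑ j, A i j * ρ j
        = φ i * (1 - ρ i) * (lam * ∑ j, A i j * ρ j) := by ring
      _ ≤ lam * ∑ j, A i j * ρ j := mul_le_of_le_one_left hS hfactor
  calc ∑ i, ω i * (-(ρ i) + lam * φ i * (1 - ρ i) * ∑ j, A i j * ρ j)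
      ≤ ∑ i, ω i * (-(ρ i) + lam * ∑ j, A i j * ρ j) :=
        sum_le_sum fun i _ => mul_le_mul_of_nonneg_left (by linarith [hinfection i]) (hω i)
    _ = -∑ i, ω i * ρ i + lam * ∑ i, ω i * ∑ j, A i j * ρ j := by
        simp only [mul_add, sum_add_distrib, mul_neg, sum_neg_distrib, mul_left_comm (ω _) lam,
          ← mul_sum]
    _ = -(1 - lam * σ) * ∑ i, ω i * ρ i := by
        rw [sum_mul_sum_eq_of_left_eigenvector heig]; ring

end WeightedSum

theorem stmt_9_general (N : ℕ) (A : Fin N → Fin N → ℝ)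
    (hA : ∀ i j, 0 ≤ A i j)
    (σ : ℝ)
    (ω : Fin N → ℝ) (hω : ∀ i, 0 < ω i)
    (heig : ∀ j, ∑ i, ω i * A i j = σ * ω j)
    (lam α : ℝ) (hlam : 0 < lam) (hα : α ∈ Set.Ioo (0 : ℝ) 1)
    (hthr : lam * (1 + α) * σ < 1)
    (ρ φ : ℝ → Fin N → ℝ)
    (hρ : ∀ t : ℝ, 0 ≤ t → ∀ i, ρ t i ∈ Set.Icc (0 : ℝ) 1)
    (hφ : ∀ t : ℝ, 0 ≤ t → ∀ i, φ t i ∈ Set.Icc (0 : ℝ) 1)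
    (hode : ∀ t : ℝ, 0 ≤ t → ∀ i,
      HasDerivAt (fun s => ρ s i)
        (-(ρ t i) + lam * φ t i * (1 - ρ t i) * ∑ j, A i j * ρ t j) t) :
    ∀ i, Filter.Tendsto (fun t => ρ t i) Filter.atTop (nhds 0) := by
  have hdecay : 0 < 1 - lam * σ := by nlinarith [hα.1]
  set V : ℝ → ℝ := fun t => ∑ i, ω i * ρ t i
  have hV₀ : ∀ t, 0 ≤ t → 0 ≤ V t := fun t ht =>
    sum_nonneg fun i _ => mul_nonneg (hω i).le (hρ t ht i).1
  have hV : ∀ t, 0 ≤ t → V t ≤ V 0 * Real.exp (-(1 - lam * σ) * t) :=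
    fun t => le_mul_exp_of_hasDerivAt_le_mul
      (fun s hs => HasDerivAt.fun_sum fun i _ => (hode s hs i).const_mul (ω i))
      (fun s hs => sum_mul_sis_le hA (fun i => (hω i).le) heig hlam.le (hρ s hs) (hφ s hs))
  exact tendsto_apply_of_tendsto_weighted_sum hω
    (eventually_atTop.2 ⟨0, fun t ht i => (hρ t ht i).1⟩)
    (tendsto_zero_of_nonneg_of_le_mul_exp_neg hdecay hV₀ hV)

/-- Global attractivity of the disease-free equilibrium below the threshold:
if `ω` is a strictly positive left eigenvector of `A` with eigenvalue `σ` and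
`λ(1+α)σ < 1`, every solution of the quenched mean-field SIS system in `[0,1]^N`
converges to zero. -/
theorem stmt_9 (N : ℕ) (hN : 0 < N) (A : Fin N → Fin N → ℝ)
    (hA : ∀ i j, 0 ≤ A i j)
    (σ : ℝ) (hσ : 0 ≤ σ)
    (ω : Fin N → ℝ) (hω : ∀ i, 0 < ω i)
    (heig : ∀ j, ∑ i, ω i * A i j = σ * ω j)
    (lam α : ℝ) (hlam : 0 < lam) (hα : α ∈ Set.Ioo (0 : ℝ) 1)
    (hthr : lam * (1 + α) * σ < 1)
    (ρ φ : ℝ → Fin N → ℝ)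
    (hρ : ∀ t : ℝ, 0 ≤ t → ∀ i, ρ t i ∈ Set.Icc (0 : ℝ) 1)
    (hφ : ∀ t : ℝ, 0 ≤ t → ∀ i, φ t i ∈ Set.Icc (0 : ℝ) 1)
    (hode : ∀ t : ℝ, 0 ≤ t → ∀ i,
      HasDerivAt (fun s => ρ s i)
        (-(ρ t i) + lam * φ t i * (1 - ρ t i) * ∑ j, A i j * ρ t j) t) :
    ∀ i, Filter.Tendsto (fun t => ρ t i) Filter.atTop (nhds 0) :=
  stmt_9_general N A hA σ ω hω heig lam α hlam hα hthr ρ φ hρ hφ hode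
end

section
/- Let N be a positive integer, let A = (a_ij) be a nonnegative real N×N matrix, let σ ≥ 0 and let ω ∈ ℝ^N be a nonnegative vector with Σ_{i=1}^N ω_i a_ij = σ ω_j for all j. Let λ > 0 and α ∈ (0,1) satisfy λ(1+α)σ ≤ 1. Suppose ρ : ℝ → ℝ^N and φ : ℝ → ℝ^N are such that for all t ≥ 0 and all i: 0 ≤ ρ_i(t) ≤ 1, 0 ≤ φ_i(t) ≤ 1, and ρ_i is differentiable at t with ρ_i′(t) = −ρ_i(t) + λ φ_i(t)(1−ρ_i(t)) Σ_{j=1}^N a_ij ρ_j(t). Then the function t ↦ Σ_{i=1}^N ω_i ρ_i(t) is nonincreasing on [0, ∞). -/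
/-!
Along a trajectory, `V̇ = Σ_i ω_i ρ̇_i`. Since `φ_i (1 - ρ_i) ≤ 1` and the infection pressure
`(A ρ)_i` is nonnegative, `V̇ ≤ λ ω ⬝ (A ρ) - ω ⬝ ρ`, and the left eigenvector turns
`ω ⬝ (A ρ)` into `σ V`. Hence `V̇ ≤ (λσ - 1) V ≤ 0`, because `λσ ≤ λ(1+α)σ ≤ 1` and `V ≥ 0`.
-/

open Matrix

theorem antitoneOn_of_hasDerivAt_nonpos {D : Set ℝ} (hD : Convex ℝ D) {f f' : ℝ → ℝ}
    (hf : ∀ x ∈ D, HasDerivAt f (f' x) x) (hf' : ∀ x ∈ D, f' x ≤ 0) : AntitoneOn f D :=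
  antitoneOn_of_hasDerivWithinAt_nonpos hD (fun x hx ↦ (hf x hx).continuousAt.continuousWithinAt)
    (fun x hx ↦ (hf x (interior_subset hx)).hasDerivWithinAt)
    fun x hx ↦ hf' x (interior_subset hx)

section SIS

variable {ι : Type*} [Fintype ι]

def sisField (lam : ℝ) (A : Matrix ι ι ℝ) (ρ φ : ι → ℝ) : ι → ℝ :=
  fun i ↦ -ρ i + lam * φ i * (1 - ρ i) * (A *ᵥ ρ) i

theorem dotProduct_mulVec_of_vecMul_eq_smul {A : Matrix ι ι ℝ} {ω : ι → ℝ} {σ : ℝ}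
    (heig : ω ᵥ* A = σ • ω) (x : ι → ℝ) : ω ⬝ᵥ (A *ᵥ x) = σ * (ω ⬝ᵥ x) := by
  rw [dotProduct_mulVec, heig, smul_dotProduct, smul_eq_mul]

theorem sisField_le {lam : ℝ} (hlam : 0 ≤ lam) {A : Matrix ι ι ℝ} (hA : ∀ i j, 0 ≤ A i j)
    {ρ φ : ι → ℝ} (hρ : ∀ i, ρ i ∈ Set.Icc (0 : ℝ) 1) (hφ : ∀ i, φ i ∈ Set.Icc (0 : ℝ) 1)
    (i : ι) : sisField lam A ρ φ i ≤ -ρ i + lam * (A *ᵥ ρ) i := by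
  have hpressure : 0 ≤ (A *ᵥ ρ) i :=
    Finset.sum_nonneg fun j _ ↦ mul_nonneg (hA i j) (hρ j).1
  have hcontact : φ i * (1 - ρ i) ≤ 1 :=
    mul_le_one₀ (hφ i).2 (by linarith [(hρ i).2]) (by linarith [(hρ i).1])
  have := mul_le_mul_of_nonneg_right (mul_le_mul_of_nonneg_left hcontact hlam) hpressure
  simp only [sisField, mul_one, ← mul_assoc] at this ⊢
  linarith

theorem dotProduct_sisField_nonpos {lam σ : ℝ} (hlam : 0 ≤ lam) (hthr : lam * σ ≤ 1)
    {A : Matrix ι ι ℝ} (hA : ∀ i j, 0 ≤ A i j) {ω : ι → ℝ} (hω : ∀ i, 0 ≤ ω i)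
    (heig : ω ᵥ* A = σ • ω) {ρ φ : ι → ℝ} (hρ : ∀ i, ρ i ∈ Set.Icc (0 : ℝ) 1)
    (hφ : ∀ i, φ i ∈ Set.Icc (0 : ℝ) 1) : ω ⬝ᵥ sisField lam A ρ φ ≤ 0 := by
  have hV : 0 ≤ ω ⬝ᵥ ρ := dotProduct_nonneg_of_nonneg hω fun i ↦ (hρ i).1
  calc ω ⬝ᵥ sisField lam A ρ φ
      ≤ ω ⬝ᵥ (-ρ + lam • (A *ᵥ ρ)) :=
        Finset.sum_le_sum fun i _ ↦ mul_le_mul_of_nonneg_left (sisField_le hlam hA hρ hφ i) (hω i)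
    _ = (lam * σ - 1) * (ω ⬝ᵥ ρ) := by
        rw [dotProduct_add, dotProduct_neg, dotProduct_smul, smul_eq_mul,
          dotProduct_mulVec_of_vecMul_eq_smul heig]
        ring
    _ ≤ 0 := mul_nonpos_of_nonpos_of_nonneg (by linarith) hV

end SIS

theorem stmt_10_general (N : ℕ) (A : Fin N → Fin N → ℝ)
    (hA : ∀ i j, 0 ≤ A i j)
    (σ : ℝ) (hσ : 0 ≤ σ)
    (ω : Fin N → ℝ) (hω : ∀ i, 0 ≤ ω i)
    (heig : ∀ j, ∑ i, ω i * A i j = σ * ω j)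
    (lam α : ℝ) (hlam : 0 < lam) (hα : α ∈ Set.Ioo (0 : ℝ) 1)
    (hthr : lam * (1 + α) * σ ≤ 1)
    (ρ φ : ℝ → Fin N → ℝ)
    (hρ : ∀ t : ℝ, 0 ≤ t → ∀ i, ρ t i ∈ Set.Icc (0 : ℝ) 1)
    (hφ : ∀ t : ℝ, 0 ≤ t → ∀ i, φ t i ∈ Set.Icc (0 : ℝ) 1)
    (hode : ∀ t : ℝ, 0 ≤ t → ∀ i,
      HasDerivAt (fun s => ρ s i)
        (-(ρ t i) + lam * φ t i * (1 - ρ t i) * ∑ j, A i j * ρ t j) t) :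
    AntitoneOn (fun t => ∑ i, ω i * ρ t i) (Set.Ici (0 : ℝ)) := by
  have hlamσ : lam * σ ≤ 1 := by nlinarith [mul_nonneg (mul_nonneg hlam.le hα.1.le) hσ]
  have heig' : ω ᵥ* A = σ • ω := funext heig
  refine antitoneOn_of_hasDerivAt_nonpos (convex_Ici 0)
    (f' := fun t ↦ ω ⬝ᵥ sisField lam A (ρ t) (φ t)) (fun t ht ↦ ?_)
    fun t ht ↦ dotProduct_sisField_nonpos hlam.le hlamσ hA hω heig' (hρ t ht) (hφ t ht)
  exact HasDerivAt.fun_sum fun i _ ↦ (hode t ht i).const_mul (ω i)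

/-- Monotonicity of the Lyapunov function `V(t) = Σ_i ω_i ρ_i(t)` at or below the
threshold `λ(1+α)σ ≤ 1`: `V` is nonincreasing on `[0,∞)`. -/
theorem stmt_10 (N : ℕ) (hN : 0 < N) (A : Fin N → Fin N → ℝ)
    (hA : ∀ i j, 0 ≤ A i j)
    (σ : ℝ) (hσ : 0 ≤ σ)
    (ω : Fin N → ℝ) (hω : ∀ i, 0 ≤ ω i)
    (heig : ∀ j, ∑ i, ω i * A i j = σ * ω j)
    (lam α : ℝ) (hlam : 0 < lam) (hα : α ∈ Set.Ioo (0 : ℝ) 1)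
    (hthr : lam * (1 + α) * σ ≤ 1)
    (ρ φ : ℝ → Fin N → ℝ)
    (hρ : ∀ t : ℝ, 0 ≤ t → ∀ i, ρ t i ∈ Set.Icc (0 : ℝ) 1)
    (hφ : ∀ t : ℝ, 0 ≤ t → ∀ i, φ t i ∈ Set.Icc (0 : ℝ) 1)
    (hode : ∀ t : ℝ, 0 ≤ t → ∀ i,
      HasDerivAt (fun s => ρ s i)
        (-(ρ t i) + lam * φ t i * (1 - ρ t i) * ∑ j, A i j * ρ t j) t) :
    AntitoneOn (fun t => ∑ i, ω i * ρ t i) (Set.Ici (0 : ℝ)) :=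
  stmt_10_general N A hA σ hσ ω hω heig lam α hlam hα hthr ρ φ hρ hφ hode
end
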